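/- arXiv:2006.03587 — 2 statements merged into one kernel-verified Lean document; each statement's English description precedes it below -/
import Mathlib

section
/- Let f : [0,ζ] → [0,∞) be continuous with f(0) = f(ζ) = 0 and f > 0 on (0,ζ), and define T = (1/2)∫₀^ζ f(y) dy and e(t) = (1/2) f( inf{ z ≥ 0 : (1/2)∫₀^z f(y) dy > t } ) for t ∈ [0,T), with e(T) = 0. Then e is continuous on [0,T], e(0) = 0, e(T) = 0 and e > 0 on (0,T). -/
/-!
The clock `F(z) = (1/2)∫₀^z f` is continuous and, since `f > 0` inside, strictly increasing from
`[0, ζ]` onto `[0, T]`. For `t = F x < T` the infimum in the definition of `e` is exactly `x`, so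
`e ∘ F = f / 2` on `[0, ζ]`; at `t = T` this still holds because `f ζ = 0`. Hence `e = (f / 2) ∘ F⁻¹`
is continuous as the composite with the inverse of a continuous injection of a compact interval,
and its zeros on `[0, T]` are the images of the zeros `0, ζ` of `f`.
-/

open intervalIntegral Set

theorem IsCompact.continuousOn_invFunOn_image {X Y : Type*} [TopologicalSpace X]
    [TopologicalSpace Y] [T2Space Y] [Nonempty X] {f : X → Y} {s : Set X} (hs : IsCompact s)
    (hinj : InjOn f s) (hf : ContinuousOn f s) : ContinuousOn (Function.invFunOn f s) (f '' s) := by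
  rw [continuousOn_iff_isClosed]
  intro t ht
  refine ⟨f '' (s ∩ t), ((hs.inter_right ht).image_of_continuousOn
    (hf.mono inter_subset_left)).isClosed, ?_⟩
  ext y
  constructor
  · rintro ⟨hy, x, hx, rfl⟩
    rw [mem_preimage, hinj.leftInvOn_invFunOn hx] at hy
    exact ⟨⟨x, ⟨hx, hy⟩, rfl⟩, x, hx, rfl⟩
  · rintro ⟨⟨x, ⟨hx, hxt⟩, rfl⟩, -⟩
    refine ⟨?_, x, hx, rfl⟩
    rwa [mem_preimage, hinj.leftInvOn_invFunOn hx]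

theorem IsCompact.continuousOn_image_of_comp {X Y Z : Type*} [TopologicalSpace X]
    [TopologicalSpace Y] [T2Space Y] [TopologicalSpace Z] {f : X → Y} {g : Y → Z} {s : Set X}
    (hs : IsCompact s) (hinj : InjOn f s) (hf : ContinuousOn f s)
    (hgf : ContinuousOn (g ∘ f) s) : ContinuousOn g (f '' s) := by
  obtain rfl | ⟨x₀, -⟩ := s.eq_empty_or_nonempty
  · simp
  have : Nonempty X := ⟨x₀⟩
  refine (hgf.comp (hs.continuousOn_invFunOn_image hinj hf)
    (surjOn_image f s).mapsTo_invFunOn).congr ?_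
  rintro _ ⟨x, hx, rfl⟩
  simp only [Function.comp_apply, hinj.leftInvOn_invFunOn hx]

theorem StrictMonoOn.csInf_setOf_lt_eq {α β : Type*} [ConditionallyCompleteLinearOrder α]
    [DenselyOrdered α] [Preorder β] {F : α → β} {a b x : α} (hF : StrictMonoOn F (Icc a b))
    (hx : x ∈ Ico a b) : sInf {z | a ≤ z ∧ F x < F z} = x := by
  have hsub : Ioc x b ⊆ {z | a ≤ z ∧ F x < F z} := fun z hz =>
    ⟨hx.1.trans hz.1.le, hF ⟨hx.1, hx.2.le⟩ ⟨hx.1.trans hz.1.le, hz.2⟩ hz.1⟩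
  refine IsGLB.csInf_eq ⟨fun z hz => ?_, fun l hl => (isGLB_Ioc hx.2).2 fun z hz => hl (hsub hz)⟩
    ⟨b, hsub ⟨hx.2, le_rfl⟩⟩
  by_contra! hzx
  exact hz.2.not_ge (hF.monotoneOn ⟨hz.1, (hzx.trans hx.2).le⟩ ⟨hx.1, hx.2.le⟩ hzx.le)

theorem strictMonoOn_primitive_of_pos {f : ℝ → ℝ} {a b : ℝ} (hf : ContinuousOn f (Icc a b))
    (hpos : ∀ z ∈ Ioo a b, 0 < f z) : StrictMonoOn (fun z => ∫ y in a..z, f y) (Icc a b) := by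
  have hint : ∀ u ∈ Icc a b, ∀ v ∈ Icc a b, IntervalIntegrable f MeasureTheory.volume u v :=
    fun u hu v hv => (hf.mono (uIcc_subset_Icc hu hv)).intervalIntegrable
  intro x hx y hy hxy
  calc ∫ z in a..x, f z
      < (∫ z in a..x, f z) + ∫ z in x..y, f z :=
        lt_add_of_pos_right _ (intervalIntegral_pos_of_pos_on (hint x hx y hy)
          (fun z hz => hpos z ⟨hx.1.trans_lt hz.1, hz.2.trans_le hy.2⟩) hxy)
    _ = ∫ z in a..y, f z :=
        integral_add_adjacent_intervals (hint a (left_mem_Icc.2 (hx.1.trans hx.2)) x hx)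
          (hint x hx y hy)

theorem continuousOn_primitive_Icc {f : ℝ → ℝ} {a b : ℝ} (hf : ContinuousOn f (Icc a b))
    (hab : a ≤ b) : ContinuousOn (fun z => ∫ y in a..z, f y) (Icc a b) := by
  rw [← uIcc_of_le hab] at hf ⊢
  exact continuousOn_primitive_interval hf.integrableOn_uIcc

/-- Time change of a spindle excursion `f` into a Bessel-type excursion `e`:
if `f : [0,ζ] → [0,∞)` is continuous, vanishes at the endpoints and is positive inside,
`T = (1/2)∫₀^ζ f` and `e(t) = (1/2) f(inf{z ≥ 0 : (1/2)∫₀^z f > t})` for `t < T`, `e(T) = 0`,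
then `e` is continuous on `[0,T]`, vanishes at `0` and `T`, and is positive on `(0,T)`. -/
theorem spindle_time_change_excursion
    (ζ : ℝ) (hζ : 0 < ζ) (f : ℝ → ℝ)
    (hf_cont : ContinuousOn f (Icc 0 ζ))
    (hf0 : f 0 = 0) (hfζ : f ζ = 0)
    (hf_pos : ∀ z ∈ Ioo 0 ζ, 0 < f z)
    (T : ℝ) (hT : T = (1/2) * ∫ y in (0:ℝ)..ζ, f y)
    (e : ℝ → ℝ)
    (he : ∀ t, e t = if t < T then
        (1/2) * f (sInf {z : ℝ | 0 ≤ z ∧ t < (1/2) * ∫ y in (0:ℝ)..z, f y})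
      else 0) :
    ContinuousOn e (Icc 0 T) ∧ e 0 = 0 ∧ e T = 0 ∧ ∀ t ∈ Ioo 0 T, 0 < e t := by
  set F : ℝ → ℝ := fun z => (1/2) * ∫ y in (0:ℝ)..z, f y with hF
  have hζ_mem : ζ ∈ Icc 0 ζ := right_mem_Icc.2 hζ.le
  have hF_mono : StrictMonoOn F (Icc 0 ζ) := fun x hx y hy hxy =>
    mul_lt_mul_of_pos_left (strictMonoOn_primitive_of_pos hf_cont hf_pos hx hy hxy) one_half_pos
  have hF_cont : ContinuousOn F (Icc 0 ζ) :=
    continuousOn_const.mul (continuousOn_primitive_Icc hf_cont hζ.le)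
  have hF0 : F 0 = 0 := by simp [hF]
  have hFζ : F ζ = T := hT.symm
  have h_image : F '' Icc 0 ζ = Icc 0 T := by
    rw [hF_cont.image_Icc_of_monotoneOn hζ.le hF_mono.monotoneOn, hF0, hFζ]
  have h_comp : ∀ x ∈ Icc 0 ζ, e (F x) = (1/2) * f x := by
    intro x hx
    rcases hx.2.lt_or_eq with hxζ | rfl
    · rw [he, if_pos (hFζ ▸ hF_mono hx hζ_mem hxζ), hF_mono.csInf_setOf_lt_eq ⟨hx.1, hxζ⟩]
    · rw [he, if_neg (hFζ ▸ lt_irrefl T), hfζ, mul_zero]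
  refine ⟨?_, ?_, ?_, ?_⟩
  · rw [← h_image]
    exact isCompact_Icc.continuousOn_image_of_comp hF_mono.injOn hF_cont
      ((continuousOn_const.mul hf_cont).congr h_comp)
  · simpa [hF0, hf0] using h_comp 0 (left_mem_Icc.2 hζ.le)
  · rw [he, if_neg (lt_irrefl T)]
  · intro t ht
    obtain ⟨x, hx, rfl⟩ := h_image.symm ▸ Ioo_subset_Icc_self ht
    have hx_pos : 0 < x := (hF_mono.lt_iff_lt (left_mem_Icc.2 hζ.le) hx).1 (by rw [hF0]; exact ht.1)
    have hx_lt : x < ζ := (hF_mono.lt_iff_lt hx hζ_mem).1 (by rw [hFζ]; exact ht.2)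
    rw [h_comp x hx]
    exact mul_pos one_half_pos (hf_pos x ⟨hx_pos, hx_lt⟩)
end

section
/- Let λ : [0,T] → [0,∞) be nondecreasing and right-continuous with λ(0-) := λ(0). Then the set β := { (λ(t-), λ(t)) : t ∈ [0,T], λ(t-) < λ(t) } is an interval partition of [0, λ(T)] if and only if the (pushforward) Stieltjes measure of λ has no absolutely continuous or singular continuous part other than on a λ-null complement, i.e., λ(T) - λ(0) equals the sum of all jumps λ(t) - λ(t-); in that case the total mass ‖β‖ equals λ(T) when λ(0) = 0 and λ is purely discontinuous. -/
/-!
Extend `l` monotonically to all of `ℝ` by `g`. For jump times `s < t` one has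
`g s ≤ leftLim g t`, so the jump intervals `(leftLim g t, g t)` are pairwise disjoint, and a
monotone function has only countably many jumps. Their union `U ⊆ [0, l T]` therefore has
Lebesgue measure equal to the sum of the jumps, and `[0, l T] \ U` is null exactly when this sum
is `l T`.
-/

open MeasureTheory Set Function

/-- `β` is an interval partition of `[0,M]`: a set of pairwise disjoint open subintervals of
`[0,M]` covering `[0,M]` up to a Lebesgue-null set. -/
def IsIntervalPartitionOf (β : Set (Set ℝ)) (M : ℝ) : Prop :=
  (∀ B ∈ β, ∃ a b : ℝ, 0 ≤ a ∧ a < b ∧ b ≤ M ∧ B = Set.Ioo a b) ∧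
  β.Pairwise Disjoint ∧
  volume (Set.Icc 0 M \ ⋃₀ β) = 0

namespace Monotone

variable {α β : Type*} [LinearOrder α] [ConditionallyCompleteLinearOrder β] [TopologicalSpace β]
  [OrderTopology β] {f : α → β}

theorem pairwise_disjoint_Ioo_leftLim (hf : Monotone f) :
    Pairwise (Disjoint on fun t => Ioo (leftLim f t) (f t)) := by
  have key : ∀ s t, s < t → Disjoint (Ioo (leftLim f s) (f s)) (Ioo (leftLim f t) (f t)) :=
    fun s t hst => disjoint_left.2 fun _ hs ht =>
      lt_irrefl _ ((hs.2.trans_le (hf.le_leftLim hst)).trans ht.1)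
  intro s t hst
  rcases hst.lt_or_gt with h | h
  · exact key s t h
  · exact (key t s h).symm

theorem countable_setOf_leftLim_lt [TopologicalSpace α] [OrderTopology α]
    [SecondCountableTopology β] (hf : Monotone f) : {t | leftLim f t < f t}.Countable :=
  hf.countable_not_continuousAt.mono fun t (hlt : leftLim f t < f t) (hcont : ContinuousAt f t) =>
    hlt.ne hcont.continuousWithinAt.leftLim_eq

theorem leftLim_eq_of_eqOn_Ioo [TopologicalSpace α] [OrderTopology α] {g : α → β} {a b : α}
    [(nhdsWithin b (Iio b)).NeBot] (hg : Monotone g) (hab : a < b) (hfg : EqOn f g (Ioo a b)) :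
    leftLim f b = leftLim g b :=
  leftLim_eq_of_tendsto <|
    (hg.tendsto_leftLim b).congr' (Filter.eventuallyEq_of_mem (Ioo_mem_nhdsLT hab) hfg.symm)

end Monotone

theorem Real.volume_Icc_sdiff_eq_zero_iff {a b : ℝ} (hab : a ≤ b) {U : Set ℝ}
    (hU : MeasurableSet U) (hUab : U ⊆ Icc a b) :
    volume (Icc a b \ U) = 0 ↔ volume.real U = b - a := by
  rw [← measureReal_eq_zero_iff (measure_ne_top_of_subset sdiff_subset (by simp)),
    measureReal_sdiff hUab hU (by simp), Real.volume_real_Icc_of_le hab, sub_eq_zero, eq_comm]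

theorem Real.volume_real_biUnion_Ioo {ι : Type*} {s : Set ι} {a b : ι → ℝ} (hs : s.Countable)
    (hd : s.PairwiseDisjoint fun i => Ioo (a i) (b i)) (hab : ∀ i ∈ s, a i ≤ b i) :
    volume.real (⋃ i ∈ s, Ioo (a i) (b i)) = ∑' i : s, (b i - a i) := by
  rw [measureReal_def, measure_biUnion hs hd fun _ _ => measurableSet_Ioo,
    ENNReal.tsum_toReal_eq fun _ => by simp]
  exact tsum_congr fun i => by rw [← measureReal_def, Real.volume_real_Ioo_of_le (hab i i.2)]

theorem Monotone.isIntervalPartitionOf_image_Ioo_leftLim_iff {g : ℝ → ℝ} (hg : Monotone g)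
    {M : ℝ} (hg0 : ∀ x, 0 ≤ g x) (hgM : ∀ x, g x ≤ M) {s : Set ℝ}
    (hs : ∀ t ∈ s, leftLim g t < g t) :
    IsIntervalPartitionOf ((fun t => Ioo (leftLim g t) (g t)) '' s) M ↔
      M = ∑' t : s, (g t - leftLim g t) := by
  have hd : s.PairwiseDisjoint fun t => Ioo (leftLim g t) (g t) :=
    hg.pairwise_disjoint_Ioo_leftLim.set_pairwise s
  have hsc : s.Countable := hg.countable_setOf_leftLim_lt.mono hs
  have hleft : ∀ t, 0 ≤ leftLim g t := fun t => (hg0 _).trans (hg.le_leftLim (sub_one_lt t))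
  have hsub : ⋃ t ∈ s, Ioo (leftLim g t) (g t) ⊆ Icc 0 M :=
    iUnion₂_subset fun t _ => Ioo_subset_Icc_self.trans (Icc_subset_Icc (hleft t) (hgM t))
  have hnull : volume (Icc 0 M \ ⋃ t ∈ s, Ioo (leftLim g t) (g t)) = 0 ↔
      M = ∑' t : s, (g t - leftLim g t) := by
    rw [Real.volume_Icc_sdiff_eq_zero_iff ((hg0 0).trans (hgM 0))
      (.biUnion hsc fun _ _ => measurableSet_Ioo) hsub,
      Real.volume_real_biUnion_Ioo hsc hd fun t ht => (hs t ht).le, sub_zero, eq_comm]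
  rw [← hnull, IsIntervalPartitionOf, sUnion_image]
  refine ⟨fun h => h.2.2, fun h => ⟨?_, hd.image, h⟩⟩
  rintro _ ⟨t, ht, rfl⟩
  exact ⟨_, _, hleft t, hs t ht, hgM t, rfl⟩

theorem skewer_intervalPartition_iff_purely_discontinuous_general
    (T : ℝ) (hT : 0 ≤ T) (l : ℝ → ℝ)
    (hmono : MonotoneOn l (Icc 0 T))
    (hl0 : l 0 = 0)
    (L : ℝ → ℝ) (hL : ∀ t, L t = if t = 0 then l 0 else leftLim l t)
    (β : Set (Set ℝ))
    (hβ : β = {S : Set ℝ | ∃ t ∈ Icc 0 T, L t < l t ∧ S = Set.Ioo (L t) (l t)}) :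
    IsIntervalPartitionOf β (l T) ↔
      l T - l 0 = ∑' t : {t : ℝ | t ∈ Icc 0 T ∧ L t < l t}, (l t - L t) := by
  set g := IccExtend hT fun x : Icc 0 T => l x
  have hg : Monotone g := (monotoneOn_iff_monotone.1 hmono).IccExtend hT
  have hgl : EqOn g l (Icc 0 T) := fun x hx => IccExtend_of_mem hT _ hx
  have hgIcc : ∀ x, g x ∈ Icc 0 (l T) := fun x =>
    let p := projIcc 0 T hT x
    ⟨hl0 ▸ hmono ⟨le_rfl, hT⟩ p.2 p.2.1, hmono p.2 ⟨hT, le_rfl⟩ p.2.2⟩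
  set J := {t : ℝ | t ∈ Icc 0 T ∧ L t < l t}
  have hJ : ∀ t ∈ J, l t = g t ∧ L t = leftLim g t := by
    rintro t ⟨ht, hlt⟩
    have ht0 : t ≠ 0 := by rintro rfl; simp [hL] at hlt
    refine ⟨(hgl ht).symm, ?_⟩
    rw [hL, if_neg ht0]
    exact hg.leftLim_eq_of_eqOn_Ioo (lt_of_le_of_ne ht.1 (Ne.symm ht0))
      fun x hx => (hgl ⟨hx.1.le, hx.2.le.trans ht.2⟩).symm
  have hβJ : β = (fun t => Ioo (leftLim g t) (g t)) '' J := by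
    rw [hβ, ← image_congr (f := fun t => Ioo (L t) (l t)) fun t ht => by
      rw [(hJ t ht).1, (hJ t ht).2]]
    ext
    simp [J, and_assoc, eq_comm]
  have hsum : ∑' t : J, (l t - L t) = ∑' t : J, (g t - leftLim g t) :=
    tsum_congr fun t => by rw [(hJ t t.2).1, (hJ t t.2).2]
  rw [hβJ, hsum, hl0, sub_zero]
  exact hg.isIntervalPartitionOf_image_Ioo_leftLim_iff (fun x => (hgIcc x).1)
    (fun x => (hgIcc x).2) fun t ht => (hJ t ht).1 ▸ (hJ t ht).2 ▸ ht.2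

/-- Let `λ : [0,T] → [0,∞)` be nondecreasing and right-continuous with `λ(0) = 0` and
`λ(0-) := λ(0)`. The collection `β = {(λ(t-), λ(t)) : t ∈ [0,T], λ(t-) < λ(t)}` is an interval
partition of `[0, λ(T)]` if and only if `λ(T) - λ(0)` equals the sum of all jumps
`λ(t) - λ(t-)`, i.e. `λ` is purely discontinuous; in that case (as `λ(0) = 0`) the total
mass of `β` is `λ(T)`. -/
theorem skewer_intervalPartition_iff_purely_discontinuous
    (T : ℝ) (hT : 0 ≤ T) (l : ℝ → ℝ)
    (hmono : MonotoneOn l (Icc 0 T))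
    (hrc : ∀ t ∈ Ico 0 T, ContinuousWithinAt l (Ici t) t)
    (hl0 : l 0 = 0)
    (L : ℝ → ℝ) (hL : ∀ t, L t = if t = 0 then l 0 else leftLim l t)
    (β : Set (Set ℝ))
    (hβ : β = {S : Set ℝ | ∃ t ∈ Icc 0 T, L t < l t ∧ S = Set.Ioo (L t) (l t)}) :
    IsIntervalPartitionOf β (l T) ↔
      l T - l 0 = ∑' t : {t : ℝ | t ∈ Icc 0 T ∧ L t < l t}, (l t - L t) :=
  skewer_intervalPartition_iff_purely_discontinuous_general T hT l hmono hl0 L hL β hβ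
end
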